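/- Suppose A receives a votes each of weight 1 and B receives b' votes with positive real weights summing to b, where a, b are integers and μ is a positive real with a > μb. Then for any fixed arrangement of the a + b' votes, at least a - ⌊μb⌋ of its a + b' cyclic permutations satisfy a_r > μ·b_r for all 1 ≤ r ≤ a + b'; consequently P ≥ (a - ⌊μb⌋)/(a + b'). -/

import Mathlib

/-- In the base labeling of the `a + bp` votes, positions `< a` are A-votes (weight 1)
and position `a + k` is B's `k`-th vote, of weight `w k`. The weight contributed to B
by the vote labeled `j` : -/
def bWeight (a bp : ℕ) (w : Fin bp → ℝ) (j : Fin (a + bp)) : ℝ :=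
  if h : j.val < a then 0 else w ⟨j.val - a, by omega⟩

/-- Number of A-votes among the first `r` positions of the arrangement `τ`. -/
def wcountA (a bp : ℕ) (τ : Fin (a + bp) → Fin (a + bp)) (r : ℕ) : ℕ :=
  (Finset.univ.filter (fun i : Fin (a + bp) => i.val < r ∧ (τ i).val < a)).card

/-- Total weight of B-votes among the first `r` positions of the arrangement `τ`. -/
noncomputable def wcountB (a bp : ℕ) (w : Fin bp → ℝ) (τ : Fin (a + bp) → Fin (a + bp))
    (r : ℕ) : ℝ :=
  ∑ i ∈ Finset.univ.filter (fun i : Fin (a + bp) => i.val < r), bWeight a bp w (τ i)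

/-- Cyclic shift of an arrangement, moving the first `i` votes to the end. -/
def cycf {n : ℕ} (τ : Fin n → Fin n) (i : ℕ) : Fin n → Fin n :=
  fun j => τ ⟨(j.val + i) % n, Nat.mod_lt _ (Nat.lt_of_le_of_lt (Nat.zero_le j.val) j.isLt)⟩

/-!
Let `S` be the walk of partial sums of the margins (`1` for an A-vote, `-μ w` for a B-vote)
along the periodically repeated arrangement: its steps are at most `1`, it gains
`T = a - μ b` per period `n = a + bp`, and the shift by `i` is a ballot order exactly when `S`
stays strictly above `S i` on `(i, i + n]`. The future minimum `F i = min_{k ≥ i} S k` gains `T`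
over a period, but it can only increase at such shifts `i`, and then by at most one step of `S`.
Hence at least `⌈T⌉ = a - ⌊μ b⌋` shifts are ballot orders. Averaging over the right translates
`σ * Equiv.addRight i` of a uniformly random permutation `σ` gives the probability bound.
-/

open Finset

namespace CycleLemma

def StaysAbove (S : ℕ → ℝ) (n i : ℕ) : Prop :=
  ∀ r, 1 ≤ r → r ≤ n → S i < S (i + r)

variable {S : ℕ → ℝ} {n : ℕ} {T : ℝ}

theorem exists_le_forall_le (hS : ∀ j, S (j + n) = S j + T) (hT : 0 ≤ T) (hn : 0 < n)
    (i : ℕ) : ∃ j, i ≤ j ∧ ∀ k, i ≤ k → S j ≤ S k := by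
  obtain ⟨j, hj, hmin⟩ := (Ico i (i + n)).exists_min_image S ⟨i, by simp [hn]⟩
  refine ⟨j, (mem_Ico.1 hj).1, fun k hk => ?_⟩
  induction k using Nat.strong_induction_on with
  | _ k ih =>
    by_cases hkn : k < i + n
    · exact hmin k (mem_Ico.2 ⟨hk, hkn⟩)
    · obtain ⟨k, rfl⟩ : ∃ k', k = k' + n := ⟨k - n, by omega⟩
      rw [hS]
      linarith [ih k (by omega) (by omega)]

open Classical in
theorem le_add_ite_staysAbove (hstep : ∀ j, S (j + 1) ≤ S j + 1) {i j j' : ℕ} (hij : i ≤ j)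
    (hj' : ∀ k, i + 1 ≤ k → S j' ≤ S k) :
    S j' ≤ S j + if StaysAbove S n i then 1 else 0 := by
  obtain rfl | hij := hij.eq_or_lt
  · split_ifs with hi
    · linarith [hj' (i + 1) le_rfl, hstep i]
    · obtain ⟨r, hr1, hrn, hr⟩ : ∃ r, 1 ≤ r ∧ r ≤ n ∧ S (i + r) ≤ S i := by
        simpa [StaysAbove] using hi
      linarith [hj' (i + r) (by omega)]
  · have := hj' j hij
    split_ifs <;> linarith

open Classical in
theorem le_card_filter_staysAbove (hS : ∀ j, S (j + n) = S j + T)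
    (hstep : ∀ j, S (j + 1) ≤ S j + 1) :
    T ≤ #{i ∈ range n | StaysAbove S n i} := by
  rcases lt_or_ge T 0 with hT | hT
  · exact hT.le.trans (Nat.cast_nonneg _)
  rcases Nat.eq_zero_or_pos n with rfl | hn
  · simp [show T = 0 by simpa using hS 0]
  choose m hm_ge hm_min using exists_le_forall_le hS hT hn
  have hperiod : S (m 0) + T ≤ S (m n) := by
    obtain ⟨k, hk⟩ : ∃ k, m n = k + n := ⟨m n - n, by have := hm_ge n; omega⟩
    rw [hk, hS]
    linarith [hm_min 0 k k.zero_le]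
  calc T ≤ S (m n) - S (m 0) := by linarith
    _ = ∑ i ∈ range n, (S (m (i + 1)) - S (m i)) := (sum_range_sub (S ∘ m) n).symm
    _ ≤ ∑ i ∈ range n, if StaysAbove S n i then 1 else 0 := by
      gcongr with i
      exact sub_le_iff_le_add'.2 (le_add_ite_staysAbove hstep (hm_ge i) (hm_min (i + 1)))
    _ = #{i ∈ range n | StaysAbove S n i} := sum_boole _ _

end CycleLemma

theorem div_card_le_card_filter_div {G ι : Type*} [Group G] [Fintype G] (p : G → Prop)
    [DecidablePred p] (s : Finset ι) (g : ι → G) (K : ℝ)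
    (hK : ∀ x, K ≤ #{i ∈ s | p (x * g i)}) :
    K / #s ≤ #{x | p x} / Fintype.card G := by
  rcases s.eq_empty_or_nonempty with rfl | hs
  · simp only [card_empty, Nat.cast_zero, div_zero]
    positivity
  have hcount : ∑ x, #{i ∈ s | p (x * g i)} = #s * #{x | p x} := by
    have := sum_card_bipartiteAbove_eq_sum_card_bipartiteBelow (s := univ) (t := s)
      (fun x i => p (x * g i))
    simp only [bipartiteAbove, bipartiteBelow] at this
    rw [this]
    exact sum_const_nat fun i _ => card_equiv (Equiv.mulRight (g i)) (by simp)
  rw [div_le_div_iff₀ (by simp [hs]) (by simp [Fintype.card_pos])]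
  calc K * Fintype.card G = ∑ _x : G, K := by simp [mul_comm]
    _ ≤ ∑ x, (#{i ∈ s | p (x * g i)} : ℝ) := sum_le_sum fun x _ => hK x
    _ = #{x | p x} * #s := by rw [← Nat.cast_sum, hcount]; push_cast; ring

namespace Ballot

def margin (a bp : ℕ) (μ : ℝ) (w : Fin bp → ℝ) (x : Fin (a + bp)) : ℝ :=
  (if x.val < a then 1 else 0) - μ * bWeight a bp w x

def IsBallotOrder (a bp : ℕ) (μ : ℝ) (w : Fin bp → ℝ) (f : Fin (a + bp) → Fin (a + bp)) :
    Prop :=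
  ∀ r, 1 ≤ r → r ≤ a + bp → μ * wcountB a bp w f r < wcountA a bp f r

variable {a bp : ℕ} (μ : ℝ) (w : Fin bp → ℝ)

theorem margin_le_one (hμ : 0 ≤ μ) (hw : ∀ k, 0 ≤ w k) (x : Fin (a + bp)) :
    margin a bp μ w x ≤ 1 := by
  unfold margin bWeight
  split_ifs
  · simp
  · nlinarith [hw ⟨x.val - a, by omega⟩]

theorem sum_margin : ∑ x, margin a bp μ w x = a - μ * ∑ k, w k := by
  have hA (i : Fin a) : margin a bp μ w (Fin.castAdd bp i) = 1 := by
    simp [margin, bWeight]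
  have hB (k : Fin bp) : margin a bp μ w (Fin.natAdd a k) = -(μ * w k) := by
    simp [margin, bWeight]
  simp [Fin.sum_univ_add, hA, hB, mul_sum, sub_eq_add_neg]

theorem wcountA_sub_mul_wcountB (f : Fin (a + bp) → Fin (a + bp)) (r : ℕ) :
    (wcountA a bp f r : ℝ) - μ * wcountB a bp w f r =
      ∑ x with x.val < r, margin a bp μ w (f x) := by
  rw [wcountA, ← filter_filter, natCast_card_filter, wcountB, mul_sum, ← sum_sub_distrib]
  rfl

open scoped Fin.NatCast

variable [NeZero (a + bp)]

-- `(j : Fin (a + bp))` is `j % (a + bp)`: the walk runs along the periodic extension of `τ`.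
def marginWalk (τ : Fin (a + bp) → Fin (a + bp)) (m : ℕ) : ℝ :=
  ∑ j ∈ range m, margin a bp μ w (τ (j : Fin (a + bp)))

theorem marginWalk_add_period {τ : Fin (a + bp) → Fin (a + bp)} (hτ : Function.Bijective τ)
    (m : ℕ) : marginWalk μ w τ (m + (a + bp)) = marginWalk μ w τ m + (a - μ * ∑ k, w k) := by
  have hperiod : marginWalk μ w τ (a + bp) = a - μ * ∑ k, w k := by
    rw [marginWalk,
      ← Fin.sum_univ_eq_sum_range (fun j => margin a bp μ w (τ (j : Fin (a + bp))))]
    simp only [Fin.cast_val_eq_self]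
    rw [hτ.sum_comp (margin a bp μ w), sum_margin]
  rw [add_comm m, marginWalk, sum_range_add, ← marginWalk, hperiod, add_comm]
  simp [marginWalk]

theorem marginWalk_succ_le (hμ : 0 ≤ μ) (hw : ∀ k, 0 ≤ w k) (τ : Fin (a + bp) → Fin (a + bp))
    (m : ℕ) : marginWalk μ w τ (m + 1) ≤ marginWalk μ w τ m + 1 := by
  rw [marginWalk, sum_range_succ, ← marginWalk]
  linarith [margin_le_one μ w hμ hw (τ (m : Fin (a + bp)))]

theorem wcountA_sub_mul_wcountB_cycf (τ : Fin (a + bp) → Fin (a + bp)) (i : ℕ) {r : ℕ}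
    (hr : r ≤ a + bp) :
    (wcountA a bp (cycf τ i) r : ℝ) - μ * wcountB a bp w (cycf τ i) r =
      marginWalk μ w τ (i + r) - marginWalk μ w τ i := by
  have hrange : range r = {j ∈ range (a + bp) | j < r} := by ext; simp; omega
  have hcycf (x : Fin (a + bp)) : cycf τ i x = τ ((i + x.val : ℕ) : Fin (a + bp)) := by
    simp only [cycf]
    congr 1
    ext
    rw [Fin.val_natCast]
    exact congrArg (· % (a + bp)) (add_comm _ _)
  rw [wcountA_sub_mul_wcountB, marginWalk, sum_range_add, ← marginWalk, add_sub_cancel_left,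
    hrange, sum_filter, sum_filter, ← Fin.sum_univ_eq_sum_range]
  simp only [hcycf]

open Classical in
theorem sub_mul_sum_le_card_filter_cycf (hμ : 0 ≤ μ) (hw : ∀ k, 0 ≤ w k)
    {τ : Fin (a + bp) → Fin (a + bp)} (hτ : Function.Bijective τ) :
    (a : ℝ) - μ * ∑ k, w k ≤ #{i ∈ range (a + bp) | IsBallotOrder a bp μ w (cycf τ i)} :=
  calc (a : ℝ) - μ * ∑ k, w k
      ≤ #{i ∈ range (a + bp) | CycleLemma.StaysAbove (marginWalk μ w τ) (a + bp) i} :=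
        CycleLemma.le_card_filter_staysAbove (marginWalk_add_period μ w hτ)
          (marginWalk_succ_le μ w hμ hw τ)
    _ ≤ _ := by
      gcongr with i
      intro hi r hr1 hrn
      linarith [hi r hr1 hrn, wcountA_sub_mul_wcountB_cycf μ w τ i hrn]

theorem cycf_eq_mul_addRight (σ : Equiv.Perm (Fin (a + bp))) (i : ℕ) :
    cycf σ i = ⇑(σ * Equiv.addRight (i : Fin (a + bp))) := by
  ext x
  simp only [cycf, Equiv.Perm.coe_mul, Function.comp_apply, Equiv.coe_addRight]
  congr 2
  ext
  simp [Fin.val_add]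

open Classical in
theorem div_le_card_filter_isBallotOrder_div (K : ℝ)
    (hK : ∀ σ : Equiv.Perm (Fin (a + bp)),
      K ≤ #{i ∈ range (a + bp) | IsBallotOrder a bp μ w (cycf σ i)}) :
    K / (a + bp) ≤
      #{σ : Equiv.Perm (Fin (a + bp)) | IsBallotOrder a bp μ w σ} /
        (univ : Finset (Equiv.Perm (Fin (a + bp)))).card := by
  have := div_card_le_card_filter_div (fun σ : Equiv.Perm (Fin (a + bp)) =>
    IsBallotOrder a bp μ w σ) (range (a + bp))
    (fun i => Equiv.addRight (i : Fin (a + bp))) K fun σ => by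
      simpa only [cycf_eq_mul_addRight] using hK σ
  simpa using this

end Ballot

open Classical in
theorem weighted_ballot_lower_bound_general (a b bp : ℕ) (μ : ℝ) (hμ : 0 < μ)
    (ha : 0 < a) (w : Fin bp → ℝ) (hw : ∀ k, 0 < w k)
    (hsum : ∑ k, w k = (b : ℝ)) :
    (∀ τ : Fin (a + bp) → Fin (a + bp), Function.Bijective τ →
      (a : ℤ) - ⌊μ * (b : ℝ)⌋ ≤
        ((Finset.range (a + bp)).filter (fun i =>
          ∀ r, 1 ≤ r → r ≤ a + bp →
            μ * wcountB a bp w (cycf τ i) r < (wcountA a bp (cycf τ i) r : ℝ))).card) ∧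
    ((a : ℝ) - (⌊μ * (b : ℝ)⌋ : ℝ)) / ((a : ℝ) + bp) ≤
      (((Finset.univ.filter (fun σ : Equiv.Perm (Fin (a + bp)) =>
          ∀ r, 1 ≤ r → r ≤ a + bp →
            μ * wcountB a bp w (⇑σ) r < (wcountA a bp (⇑σ) r : ℝ))).card : ℝ) /
        ((Finset.univ : Finset (Equiv.Perm (Fin (a + bp)))).card : ℝ)) := by
  have : NeZero (a + bp) := ⟨by omega⟩
  have hshifts (τ : Fin (a + bp) → Fin (a + bp)) (hτ : Function.Bijective τ) :
      (a : ℤ) - ⌊μ * (b : ℝ)⌋ ≤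
        #{i ∈ range (a + bp) | Ballot.IsBallotOrder a bp μ w (cycf τ i)} := by
    have hceil : ⌈(a : ℝ) - μ * b⌉ = (a : ℤ) - ⌊μ * (b : ℝ)⌋ := by
      rw [sub_eq_neg_add, Int.ceil_add_natCast, Int.ceil_neg, neg_add_eq_sub]
    rw [← hceil, Int.ceil_le]
    exact_mod_cast hsum ▸
      Ballot.sub_mul_sum_le_card_filter_cycf μ w hμ.le (fun k => (hw k).le) hτ
  refine ⟨hshifts, Ballot.div_le_card_filter_isBallotOrder_div μ w _ fun σ => ?_⟩
  exact_mod_cast hshifts σ σ.bijective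

open Classical in
theorem weighted_ballot_lower_bound (a b bp : ℕ) (μ : ℝ) (hμ : 0 < μ)
    (ha : 0 < a) (hbp : 0 < bp) (w : Fin bp → ℝ) (hw : ∀ k, 0 < w k)
    (hsum : ∑ k, w k = (b : ℝ)) (hab : μ * b < a) :
    (∀ τ : Fin (a + bp) → Fin (a + bp), Function.Bijective τ →
      (a : ℤ) - ⌊μ * (b : ℝ)⌋ ≤
        ((Finset.range (a + bp)).filter (fun i =>
          ∀ r, 1 ≤ r → r ≤ a + bp →
            μ * wcountB a bp w (cycf τ i) r < (wcountA a bp (cycf τ i) r : ℝ))).card) ∧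
    ((a : ℝ) - (⌊μ * (b : ℝ)⌋ : ℝ)) / ((a : ℝ) + bp) ≤
      (((Finset.univ.filter (fun σ : Equiv.Perm (Fin (a + bp)) =>
          ∀ r, 1 ≤ r → r ≤ a + bp →
            μ * wcountB a bp w (⇑σ) r < (wcountA a bp (⇑σ) r : ℝ))).card : ℝ) /
        ((Finset.univ : Finset (Equiv.Perm (Fin (a + bp)))).card : ℝ)) :=
  weighted_ballot_lower_bound_general a b bp μ hμ ha w hw hsum
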